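/- 𝒬^fsc is a nonempty compact subset of [0,1]^{𝒜×𝒜⁰} endowed with the product topology of pointwise convergence. -/

import Mathlib

open Set

open scoped Classical

variable {Ω : Type*}

/-- A field of sets on `Ω`: contains `univ`, closed under complements and finite unions. -/
def IsSetField (𝒜 : Set (Set Ω)) : Prop :=
  Set.univ ∈ 𝒜 ∧ (∀ A ∈ 𝒜, Aᶜ ∈ 𝒜) ∧ ∀ A ∈ 𝒜, ∀ B ∈ 𝒜, A ∪ B ∈ 𝒜

/-- A finitely additive probability on the field `𝒜`. -/
def IsFAP (𝒜 : Set (Set Ω)) (P : Set Ω → ℝ) : Prop :=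
  (∀ A ∈ 𝒜, 0 ≤ P A ∧ P A ≤ 1) ∧ P Set.univ = 1 ∧
    ∀ A ∈ 𝒜, ∀ B ∈ 𝒜, Disjoint A B → P (A ∪ B) = P A + P B

/-- A partition of `Ω` into nonempty pairwise disjoint pieces. -/
def IsPartition {ι : Type*} (H : ι → Set Ω) : Prop :=
  (∀ i, (H i).Nonempty) ∧ (Pairwise fun i j => Disjoint (H i) (H j)) ∧
    (⋃ i, H i) = Set.univ

/-- A field containing every member of the partition `H` and whose members are
unions of members of the partition. -/
def IsFieldOver {ι : Type*} (H : ι → Set Ω) (𝒜L : Set (Set Ω)) : Prop :=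
  IsSetField 𝒜L ∧ (∀ i, H i ∈ 𝒜L) ∧ ∀ A ∈ 𝒜L, ∃ S : Set ι, A = ⋃ i ∈ S, H i

/-- A field containing `𝒜L ∪ 𝒜E` whose members are unions of the atoms `H i ∩ E j`. -/
def IsJointField {ι κ : Type*} (H : ι → Set Ω) (E : κ → Set Ω)
    (𝒜L 𝒜E 𝒜 : Set (Set Ω)) : Prop :=
  IsSetField 𝒜 ∧ 𝒜L ⊆ 𝒜 ∧ 𝒜E ⊆ 𝒜 ∧
    ∀ A ∈ 𝒜, ∃ S : Set (ι × κ), A = ⋃ p ∈ S, H p.1 ∩ E p.2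

/-- A strategy on `𝒜 × ℒ`: each `σ (·|H i)` is a finitely additive probability on `𝒜`
equal to `1` on events implied by `H i`. -/
def IsStrategy {ι : Type*} (𝒜 : Set (Set Ω)) (H : ι → Set Ω) (σ : Set Ω → ι → ℝ) : Prop :=
  ∀ i, IsFAP 𝒜 (fun F => σ F i) ∧ ∀ F ∈ 𝒜, H i ⊆ F → σ F i = 1

/-- A full conditional probability on the field `𝒜` (conditions (C1), (C2), (C3)). -/
def IsFCP (𝒜 : Set (Set Ω)) (P : Set Ω → Set Ω → ℝ) : Prop :=
  (∀ E ∈ 𝒜, ∀ K ∈ 𝒜, K.Nonempty → P E K = P (E ∩ K) K) ∧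
  (∀ K ∈ 𝒜, K.Nonempty → IsFAP 𝒜 fun E => P E K) ∧
  ∀ E ∈ 𝒜, ∀ F ∈ 𝒜, ∀ K ∈ 𝒜, K.Nonempty → (E ∩ K).Nonempty →
    P (E ∩ F) K = P E K * P F (E ∩ K)

/-- `P` extends the prior `π` on `𝒜L` and the strategy `σ` on `𝒜 × ℒ`. -/
def ExtendsPriorStrategy {ι : Type*} (𝒜 𝒜L : Set (Set Ω)) (H : ι → Set Ω)
    (π : Set Ω → ℝ) (σ : Set Ω → ι → ℝ) (P : Set Ω → Set Ω → ℝ) : Prop :=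
  (∀ B ∈ 𝒜L, P B Set.univ = π B) ∧ ∀ F ∈ 𝒜, ∀ i, P F (H i) = σ F i

/-- The set `𝒫` of full conditional probabilities on `𝒜` extending `{π, σ}`. -/
def FCPSet {ι : Type*} (𝒜 𝒜L : Set (Set Ω)) (H : ι → Set Ω)
    (π : Set Ω → ℝ) (σ : Set Ω → ι → ℝ) : Set (Set Ω → Set Ω → ℝ) :=
  {P | IsFCP 𝒜 P ∧ ExtendsPriorStrategy 𝒜 𝒜L H π σ P}

/-- Lower envelope of a set of conditional probabilities at `F|K`. -/
noncomputable def lowEnv (Ps : Set (Set Ω → Set Ω → ℝ)) (F K : Set Ω) : ℝ :=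
  sInf ((fun P => P F K) '' Ps)

/-- Upper envelope of a set of conditional probabilities at `F|K`. -/
noncomputable def upEnv (Ps : Set (Set Ω → Set Ω → ℝ)) (F K : Set Ω) : ℝ :=
  sSup ((fun P => P F K) '' Ps)

/-- A finite partition of `Ω` contained in `𝒜L`. -/
def IsFinPart (𝒜L : Set (Set Ω)) (T : Finset (Set Ω)) : Prop :=
  (↑T : Set (Set Ω)) ⊆ 𝒜L ∧ (∀ A ∈ T, (A : Set Ω).Nonempty) ∧
    (∀ A ∈ T, ∀ B ∈ T, A ≠ B → Disjoint A B) ∧ ⋃₀ (↑T : Set (Set Ω)) = Set.univ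

/-- Lower Stieltjes integral of `X : ℒ → ℝ` with respect to `μ` on `𝒜L`. -/
noncomputable def lowerSInt {ι : Type*} (H : ι → Set Ω) (𝒜L : Set (Set Ω))
    (X : ι → ℝ) (μ : Set Ω → ℝ) : ℝ :=
  sSup {x | ∃ T : Finset (Set Ω), IsFinPart 𝒜L T ∧
    x = ∑ A ∈ T, sInf {y | ∃ i, H i ⊆ A ∧ y = X i} * μ A}

/-- Upper Stieltjes integral of `X : ℒ → ℝ` with respect to `μ` on `𝒜L`. -/
noncomputable def upperSInt {ι : Type*} (H : ι → Set Ω) (𝒜L : Set (Set Ω))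
    (X : ι → ℝ) (μ : Set Ω → ℝ) : ℝ :=
  sInf {x | ∃ T : Finset (Set Ω), IsFinPart 𝒜L T ∧
    x = ∑ A ∈ T, sSup {y | ∃ i, H i ⊆ A ∧ y = X i} * μ A}

/-- `𝒜L`-continuity of a bounded function `X : ℒ → ℝ`. -/
def ALContinuous {ι : Type*} (H : ι → Set Ω) (𝒜L : Set (Set Ω)) (X : ι → ℝ) : Prop :=
  (∃ M : ℝ, ∀ i, |X i| ≤ M) ∧ ∀ t : ℝ, ∀ ε > (0 : ℝ), ∃ A ∈ 𝒜L,
    (⋃ i ∈ {i | t + ε ≤ X i}, H i) ⊆ A ∧ A ⊆ ⋃ i ∈ {i | t ≤ X i}, H i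

/-- Countable additivity of `P` on the field `𝒜`. -/
def CountablyAdditiveOn (𝒜 : Set (Set Ω)) (P : Set Ω → ℝ) : Prop :=
  ∀ A : ℕ → Set Ω, (∀ n, A n ∈ 𝒜) → (Pairwise fun m n => Disjoint (A m) (A n)) →
    (⋃ n, A n) ∈ 𝒜 → HasSum (fun n => P (A n)) (P (⋃ n, A n))

/-- A (normalized) capacity on the field `𝒜`. -/
def IsCapacity (𝒜 : Set (Set Ω)) (φ : Set Ω → ℝ) : Prop :=
  φ ∅ = 0 ∧ φ Set.univ = 1 ∧ (∀ A ∈ 𝒜, 0 ≤ φ A ∧ φ A ≤ 1) ∧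
    ∀ A ∈ 𝒜, ∀ B ∈ 𝒜, A ⊆ B → φ A ≤ φ B

/-- Total monotonicity of a capacity `φ` on the field `𝒜`. -/
def TotallyMonotone (𝒜 : Set (Set Ω)) (φ : Set Ω → ℝ) : Prop :=
  ∀ n : ℕ, 2 ≤ n → ∀ A : Fin n → Set Ω, (∀ i, A i ∈ 𝒜) →
    ∑ s ∈ Finset.univ.powerset.filter (fun s : Finset (Fin n) => s.Nonempty),
      (-1 : ℝ) ^ (s.card - 1) * φ (⋂ i ∈ s, A i) ≤ φ (⋃ i, A i)

/-- Restriction of a conditional probability to the domain `𝒜 × ℬ⁰`, viewed as a point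
of the product space `ℝ^(𝒜 × ℬ⁰)`. -/
def restrictPairs (𝒜 ℬ : Set (Set Ω)) (Q : Set Ω → Set Ω → ℝ)
    (p : {p : Set Ω × Set Ω // p.1 ∈ 𝒜 ∧ p.2 ∈ ℬ ∧ p.2.Nonempty}) : ℝ :=
  Q p.val.1 p.val.2

/-- Restriction of a set function to the domain `𝒜`, viewed as a point of `ℝ^𝒜`. -/
def restrictDom (𝒜 : Set (Set Ω)) (μ : Set Ω → ℝ) (A : {A : Set Ω // A ∈ 𝒜}) : ℝ :=
  μ A.val

/-- The field of all unions of members of the partition `H`, i.e. `⟨ℒ⟩*`. -/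
def unionsOf {ι : Type*} (H : ι → Set Ω) : Set (Set Ω) :=
  {A | ∃ S : Set ι, A = ⋃ i ∈ S, H i}

/-- The set `𝒬^fd` of fully ℒ-disintegrable full conditional probabilities on `𝒜`
extending `{π, σ}`. -/
def QfdSet {ι : Type*} (𝒜 𝒜L : Set (Set Ω)) (H : ι → Set Ω)
    (π : Set Ω → ℝ) (σ : Set Ω → ι → ℝ) : Set (Set Ω → Set Ω → ℝ) :=
  {Q | IsFCP 𝒜 Q ∧ ExtendsPriorStrategy 𝒜 𝒜L H π σ Q ∧
    ∀ F ∈ 𝒜, ∀ K ∈ 𝒜L, K.Nonempty →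
      Q F K = lowerSInt H 𝒜L (fun i => σ F i) fun B => Q B K}

/-- The set `𝒬^fsc` of fully strongly ℒ-conglomerable full conditional probabilities
on `𝒜` extending `{π, σ}`. -/
def QfscSet {ι : Type*} (𝒜 𝒜L : Set (Set Ω)) (H : ι → Set Ω)
    (π : Set Ω → ℝ) (σ : Set Ω → ι → ℝ) : Set (Set Ω → Set Ω → ℝ) :=
  {Q | IsFCP 𝒜 Q ∧ ExtendsPriorStrategy 𝒜 𝒜L H π σ Q ∧
    ∀ F ∈ 𝒜, ∀ K ∈ 𝒜L, K.Nonempty → ∀ B ∈ 𝒜L, B.Nonempty → B ⊆ K →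
      Q B K * sInf {x | ∃ i, H i ⊆ B ∧ x = σ F i} ≤ Q (F ∩ B) K ∧
      Q (F ∩ B) K ≤ Q B K * sSup {x | ∃ i, H i ⊆ B ∧ x = σ F i}}

/-- The set `𝒫^sc` of strongly ℒ-conglomerable joint probabilities consistent with `{π, σ}`. -/
def PscSet {ι : Type*} (𝒜 𝒜L : Set (Set Ω)) (H : ι → Set Ω)
    (π : Set Ω → ℝ) (σ : Set Ω → ι → ℝ) : Set (Set Ω → ℝ) :=
  {μ | (∃ P ∈ FCPSet 𝒜 𝒜L H π σ, μ = fun F => P F Set.univ) ∧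
    ∀ F ∈ 𝒜, ∀ B ∈ 𝒜L, B.Nonempty →
      π B * sInf {x | ∃ i, H i ⊆ B ∧ x = σ F i} ≤ μ (F ∩ B) ∧
      μ (F ∩ B) ≤ π B * sSup {x | ∃ i, H i ⊆ B ∧ x = σ F i}}

/-- The set `𝒫^fd` of fully ℒ-disintegrable conditional probabilities on `𝒜 × 𝒜L⁰`
extending `{π, σ}`. -/
def PfdSet {ι : Type*} (𝒜 𝒜L : Set (Set Ω)) (H : ι → Set Ω)
    (π : Set Ω → ℝ) (σ : Set Ω → ι → ℝ) : Set (Set Ω → Set Ω → ℝ) :=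
  {P | (∀ E ∈ 𝒜, ∀ K ∈ 𝒜L, K.Nonempty → P E K = P (E ∩ K) K) ∧
    (∀ K ∈ 𝒜L, K.Nonempty → IsFAP 𝒜 fun E => P E K) ∧
    (∀ E ∈ 𝒜, ∀ F ∈ 𝒜, ∀ K ∈ 𝒜L, K.Nonempty → E ∩ K ∈ 𝒜L → (E ∩ K).Nonempty →
      P (E ∩ F) K = P E K * P F (E ∩ K)) ∧
    (∀ B ∈ 𝒜L, P B Set.univ = π B) ∧ (∀ F ∈ 𝒜, ∀ i, P F (H i) = σ F i) ∧
    ∀ F ∈ 𝒜, ∀ K ∈ 𝒜L, K.Nonempty →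
      P F K = lowerSInt H 𝒜L (fun i => σ F i) fun B => P B K}

/-- The Choquet integral `C∫ X dφ = ∫₀¹ φ₊((X ≥ t)) dt` of a `[0,1]`-valued `X : ℒ → ℝ`
with respect to a capacity `φ` on `𝒜L`, where `φ₊` is the inner extension of `φ`. -/
noncomputable def choquetInt {ι : Type*} (H : ι → Set Ω) (𝒜L : Set (Set Ω))
    (X : ι → ℝ) (φ : Set Ω → ℝ) : ℝ :=
  ∫ t in (0 : ℝ)..(1 : ℝ),
    sSup {y | ∃ B ∈ 𝒜L, B ⊆ (⋃ i ∈ {i | t ≤ X i}, H i) ∧ y = φ B}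

/-!
For a finite family `s ⊆ 𝒜L`, mixing the strategies `σ(·|H i)` over the cells of `s` with the
weights `π` gives a finitely additive probability on `𝒜` that agrees with `π` on `s` and, like
each `σ(·|H i)`, is strongly conglomerable. Conditioning lexicographically, first on this
mixture, then on the `σ(·|H i)`, then on point masses, turns it into a full conditional
probability which is fully strongly conglomerable; at `B = K = H i` full strong conglomerability
forces `Q(·|H i) = σ(·|H i)`. Full strong conglomerability is a closed condition in the cube
`[0,1]^(𝒜 × 𝒜⁰)`, so by compactness the prior constraints `Q(B|Ω) = π B`, `B ∈ 𝒜L`, which have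
the finite intersection property, can all be met at once.
-/

theorem IsSetField.isSetAlgebra {𝒜 : Set (Set Ω)} (h𝒜 : IsSetField 𝒜) :
    MeasureTheory.IsSetAlgebra 𝒜 where
  empty_mem := by simpa using h𝒜.2.1 _ h𝒜.1
  compl_mem := h𝒜.2.1
  union_mem := fun _ _ hA hB => h𝒜.2.2 _ hA _ hB

namespace IsFAP

variable {𝒜 : Set (Set Ω)} {P : Set Ω → ℝ} {A B K : Set Ω}

theorem nonneg (hP : IsFAP 𝒜 P) (hA : A ∈ 𝒜) : 0 ≤ P A := (hP.1 A hA).1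

theorem empty (h𝒜 : IsSetField 𝒜) (hP : IsFAP 𝒜 P) : P ∅ = 0 := by
  have h0 := h𝒜.isSetAlgebra.empty_mem
  have := hP.2.2 ∅ h0 ∅ h0 (disjoint_empty _)
  rw [union_empty] at this
  linarith

theorem inter_add_diff (h𝒜 : IsSetField 𝒜) (hP : IsFAP 𝒜 P) (hA : A ∈ 𝒜) (hB : B ∈ 𝒜) :
    P (A ∩ B) + P (A \ B) = P A := by
  rw [← hP.2.2 _ (h𝒜.isSetAlgebra.inter_mem hA hB) _ (h𝒜.isSetAlgebra.sdiff_mem hA hB)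
    (disjoint_sdiff_inter.symm), inter_union_sdiff]

theorem mono (h𝒜 : IsSetField 𝒜) (hP : IsFAP 𝒜 P) (hA : A ∈ 𝒜) (hB : B ∈ 𝒜) (hAB : A ⊆ B) :
    P A ≤ P B := by
  have := hP.inter_add_diff h𝒜 hB hA
  rw [inter_eq_right.2 hAB] at this
  linarith [hP.nonneg (h𝒜.isSetAlgebra.sdiff_mem hB hA)]

theorem compl (h𝒜 : IsSetField 𝒜) (hP : IsFAP 𝒜 P) (hA : A ∈ 𝒜) : P Aᶜ = 1 - P A := by
  have := hP.2.2 A hA Aᶜ (h𝒜.2.1 A hA) disjoint_compl_right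
  rw [union_compl_self, hP.2.1] at this
  linarith

theorem biUnion (h𝒜 : IsSetField 𝒜) (hP : IsFAP 𝒜 P) {β : Type*} (t : Finset β)
    {g : β → Set Ω} (hg : ∀ b ∈ t, g b ∈ 𝒜) (hd : (t : Set β).PairwiseDisjoint g) :
    P (⋃ b ∈ t, g b) = ∑ b ∈ t, P (g b) := by
  classical
  induction t using Finset.induction_on with
  | empty => simpa using hP.empty h𝒜
  | insert a t ha ih =>
    rw [Finset.set_biUnion_insert, Finset.sum_insert ha,
      hP.2.2 _ (hg a (t.mem_insert_self a)) _
        (h𝒜.isSetAlgebra.biUnion_mem t fun b hb => hg b (Finset.mem_insert_of_mem hb))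
        (disjoint_iUnion₂_right.2 fun b hb => hd (t.mem_insert_self a)
          (Finset.mem_insert_of_mem hb) (ne_of_mem_of_not_mem hb ha).symm),
      ih (fun b hb => hg b (Finset.mem_insert_of_mem hb)) (hd.subset (by simp))]

theorem div (h𝒜 : IsSetField 𝒜) (hP : IsFAP 𝒜 P) (hK : K ∈ 𝒜) (hpos : 0 < P K) :
    IsFAP 𝒜 fun E => P (E ∩ K) / P K := by
  have hcap : ∀ {E}, E ∈ 𝒜 → E ∩ K ∈ 𝒜 := fun hE => h𝒜.isSetAlgebra.inter_mem hE hK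
  refine ⟨fun E hE => ⟨div_nonneg (hP.nonneg (hcap hE)) hpos.le, ?_⟩, ?_, ?_⟩
  · exact (div_le_one hpos).2 (hP.mono h𝒜 (hcap hE) hK inter_subset_right)
  · simp only [univ_inter, div_self hpos.ne']
  · intro E hE F hF hEF
    simp only [union_inter_distrib_right, ← add_div]
    rw [hP.2.2 _ (hcap hE) _ (hcap hF) (hEF.mono inter_subset_left inter_subset_left)]

end IsFAP

theorem isFAP_indicator (𝒜 : Set (Set Ω)) (x : Ω) :
    IsFAP 𝒜 fun A => A.indicator (1 : Ω → ℝ) x := by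
  refine ⟨fun A _ => ?_, by simp, fun A _ B _ hAB =>
    congrFun (indicator_union_of_disjoint hAB _) x⟩
  by_cases hx : x ∈ A <;> simp [hx]

theorem isFAP_sum {𝒜 : Set (Set Ω)} {β : Type*} (t : Finset β) {w : β → ℝ}
    {P : β → Set Ω → ℝ} (hw : ∀ b ∈ t, 0 ≤ w b) (hw1 : ∑ b ∈ t, w b = 1)
    (hP : ∀ b ∈ t, IsFAP 𝒜 (P b)) : IsFAP 𝒜 fun A => ∑ b ∈ t, w b * P b A := by
  refine ⟨fun A hA => ⟨?_, ?_⟩, ?_, fun A hA B hB hAB => ?_⟩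
  · exact Finset.sum_nonneg fun b hb => mul_nonneg (hw b hb) ((hP b hb).nonneg hA)
  · calc ∑ b ∈ t, w b * P b A ≤ ∑ b ∈ t, w b :=
          Finset.sum_le_sum fun b hb => mul_le_of_le_one_right (hw b hb) ((hP b hb).1 A hA).2
      _ = 1 := hw1
  · rw [← hw1]
    exact Finset.sum_congr rfl fun b hb => by rw [(hP b hb).2.1, mul_one]
  · simp only [← Finset.sum_add_distrib, ← mul_add]
    exact Finset.sum_congr rfl fun b hb => by rw [(hP b hb).2.2 A hA B hB hAB]

section Partition

variable {ι : Type*} {H : ι → Set Ω} {𝒜L : Set (Set Ω)} {A : Set Ω}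

theorem IsPartition.eq_of_subset (hH : IsPartition H) {i j : ι} (h : H i ⊆ H j) : i = j := by
  by_contra hij
  obtain ⟨x, hx⟩ := hH.1 i
  exact disjoint_left.1 (hH.2.1 hij) hx (h hx)

theorem IsPartition.exists_mem (hH : IsPartition H) (x : Ω) : ∃ i, x ∈ H i :=
  mem_iUnion.1 (hH.2.2 ▸ mem_univ x)

theorem IsFieldOver.exists_subset (h𝒜L : IsFieldOver H 𝒜L) (hA : A ∈ 𝒜L) (hne : A.Nonempty) :
    ∃ i, H i ⊆ A := by
  obtain ⟨S, rfl⟩ := h𝒜L.2.2 A hA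
  obtain ⟨x, hx⟩ := hne
  obtain ⟨i, hi, -⟩ := mem_iUnion₂.1 hx
  exact ⟨i, subset_biUnion_of_mem hi⟩

theorem IsFieldOver.subset_or_disjoint (hH : IsPartition H) (h𝒜L : IsFieldOver H 𝒜L)
    (hA : A ∈ 𝒜L) (i : ι) : H i ⊆ A ∨ Disjoint (H i) A := by
  obtain ⟨S, rfl⟩ := h𝒜L.2.2 A hA
  by_cases hi : i ∈ S
  · exact Or.inl (subset_biUnion_of_mem hi)
  · exact Or.inr (disjoint_iUnion₂_right.2 fun j hj => hH.2.1 (ne_of_mem_of_not_mem hj hi).symm)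

end Partition

namespace IsStrategy

variable {ι : Type*} {𝒜 : Set (Set Ω)} {H : ι → Set Ω} {σ : Set Ω → ι → ℝ} {F B : Set Ω} {i : ι}

theorem eq_zero_of_disjoint (h𝒜 : IsSetField 𝒜) (hσ : IsStrategy 𝒜 H σ) (hF : F ∈ 𝒜)
    (h : Disjoint (H i) F) : σ F i = 0 := by
  have := (hσ i).1.compl h𝒜 hF
  rw [(hσ i).2 Fᶜ (h𝒜.2.1 F hF) (subset_compl_iff_disjoint_right.2 h)] at this
  linarith

theorem inter_eq_of_subset (h𝒜 : IsSetField 𝒜) (hσ : IsStrategy 𝒜 H σ) (hF : F ∈ 𝒜)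
    (hB : B ∈ 𝒜) (h : H i ⊆ B) : σ (F ∩ B) i = σ F i := by
  have := (hσ i).1.inter_add_diff h𝒜 hF hB
  rw [hσ.eq_zero_of_disjoint h𝒜 (h𝒜.isSetAlgebra.sdiff_mem hF hB)
    (disjoint_of_subset_left h disjoint_sdiff_right)] at this
  linarith

end IsStrategy

section Conglomerability

variable {ι : Type*} {𝒜 𝒜L : Set (Set Ω)} {H : ι → Set Ω} {σ : Set Ω → ι → ℝ}
  {F B K : Set Ω}

def stratValues (H : ι → Set Ω) (σ : Set Ω → ι → ℝ) (F B : Set Ω) : Set ℝ :=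
  {x | ∃ i, H i ⊆ B ∧ x = σ F i}

theorem bddBelow_stratValues (hσ : IsStrategy 𝒜 H σ) (hF : F ∈ 𝒜) :
    BddBelow (stratValues H σ F B) :=
  ⟨0, by rintro _ ⟨i, -, rfl⟩; exact (hσ i).1.nonneg hF⟩

theorem bddAbove_stratValues (hσ : IsStrategy 𝒜 H σ) (hF : F ∈ 𝒜) :
    BddAbove (stratValues H σ F B) :=
  ⟨1, by rintro _ ⟨i, -, rfl⟩; exact ((hσ i).1.1 F hF).2⟩

theorem stratValues_block (hH : IsPartition H) (i : ι) :
    stratValues H σ F (H i) = {σ F i} := by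
  ext x
  constructor
  · rintro ⟨j, hj, rfl⟩
    rw [hH.eq_of_subset hj, mem_singleton_iff]
  · rintro rfl
    exact ⟨i, subset_rfl, rfl⟩

def IsStronglyConglomerable (𝒜 𝒜L : Set (Set Ω)) (H : ι → Set Ω) (σ : Set Ω → ι → ℝ)
    (ν : Set Ω → ℝ) : Prop :=
  ∀ F ∈ 𝒜, ∀ B ∈ 𝒜L, ν B * sInf (stratValues H σ F B) ≤ ν (F ∩ B) ∧
    ν (F ∩ B) ≤ ν B * sSup (stratValues H σ F B)

theorem isStronglyConglomerable_strategy (hH : IsPartition H) (h𝒜L : IsFieldOver H 𝒜L)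
    (h𝒜 : IsSetField 𝒜) (hsub : 𝒜L ⊆ 𝒜) (hσ : IsStrategy 𝒜 H σ) (i : ι) :
    IsStronglyConglomerable 𝒜 𝒜L H σ fun A => σ A i := by
  intro F hF B hB
  dsimp only
  rcases h𝒜L.subset_or_disjoint hH hB i with hiB | hiB
  · have hmem : σ F i ∈ stratValues H σ F B := ⟨i, hiB, rfl⟩
    rw [(hσ i).2 B (hsub hB) hiB, one_mul, one_mul, hσ.inter_eq_of_subset h𝒜 hF (hsub hB) hiB]
    exact ⟨csInf_le (bddBelow_stratValues hσ hF) hmem, le_csSup (bddAbove_stratValues hσ hF) hmem⟩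
  · rw [hσ.eq_zero_of_disjoint h𝒜 (hsub hB) hiB,
      hσ.eq_zero_of_disjoint h𝒜 (h𝒜.isSetAlgebra.inter_mem hF (hsub hB))
        (hiB.mono_right inter_subset_right)]
    simp

theorem IsStronglyConglomerable.sum {β : Type*} (t : Finset β) {w : β → ℝ}
    {ν : β → Set Ω → ℝ} (hw : ∀ b ∈ t, 0 ≤ w b)
    (hν : ∀ b ∈ t, IsStronglyConglomerable 𝒜 𝒜L H σ (ν b)) :
    IsStronglyConglomerable 𝒜 𝒜L H σ fun A => ∑ b ∈ t, w b * ν b A := by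
  intro F hF B hB
  simp only [Finset.sum_mul]
  constructor <;> refine Finset.sum_le_sum fun b hb => ?_ <;> rw [mul_assoc]
  · exact mul_le_mul_of_nonneg_left ((hν b hb F hF B hB).1) (hw b hb)
  · exact mul_le_mul_of_nonneg_left ((hν b hb F hF B hB).2) (hw b hb)

theorem IsStronglyConglomerable.div {ν : Set Ω → ℝ} (hν : IsStronglyConglomerable 𝒜 𝒜L H σ ν)
    (hF : F ∈ 𝒜) (hB : B ∈ 𝒜L) (hBK : B ⊆ K) (hpos : 0 < ν K) :
    ν (B ∩ K) / ν K * sInf (stratValues H σ F B) ≤ ν (F ∩ B ∩ K) / ν K ∧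
      ν (F ∩ B ∩ K) / ν K ≤ ν (B ∩ K) / ν K * sSup (stratValues H σ F B) := by
  rw [inter_eq_left.2 hBK, inter_eq_left.2 (inter_subset_right.trans hBK),
    div_mul_eq_mul_div, div_mul_eq_mul_div]
  exact ⟨div_le_div_of_nonneg_right (hν F hF B hB).1 hpos.le,
    div_le_div_of_nonneg_right (hν F hF B hB).2 hpos.le⟩

end Conglomerability

section FullConglomerability

variable {ι : Type*} {𝒜 𝒜L : Set (Set Ω)} {H : ι → Set Ω} {σ : Set Ω → ι → ℝ}
  {Q : Set Ω → Set Ω → ℝ}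

def IsFullyStronglyConglomerable (𝒜 𝒜L : Set (Set Ω)) (H : ι → Set Ω)
    (σ : Set Ω → ι → ℝ) (Q : Set Ω → Set Ω → ℝ) : Prop :=
  ∀ F ∈ 𝒜, ∀ K ∈ 𝒜L, K.Nonempty → ∀ B ∈ 𝒜L, B.Nonempty → B ⊆ K →
    Q B K * sInf (stratValues H σ F B) ≤ Q (F ∩ B) K ∧
      Q (F ∩ B) K ≤ Q B K * sSup (stratValues H σ F B)

def FSCSet (𝒜 𝒜L : Set (Set Ω)) (H : ι → Set Ω) (σ : Set Ω → ι → ℝ) :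
    Set (Set Ω → Set Ω → ℝ) :=
  {Q | IsFCP 𝒜 Q ∧ IsFullyStronglyConglomerable 𝒜 𝒜L H σ Q}

theorem IsFCP.self_eq_one (h𝒜 : IsSetField 𝒜) (hQ : IsFCP 𝒜 Q) {K : Set Ω} (hK : K ∈ 𝒜)
    (hne : K.Nonempty) : Q K K = 1 := by
  have h := hQ.1 univ h𝒜.1 K hK hne
  rw [univ_inter] at h
  rw [← h]
  exact (hQ.2.1 K hK hne).2.1

theorem IsFullyStronglyConglomerable.cond_block_eq (hH : IsPartition H)
    (h𝒜L : IsFieldOver H 𝒜L) (h𝒜 : IsSetField 𝒜) (hsub : 𝒜L ⊆ 𝒜) (hFCP : IsFCP 𝒜 Q)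
    (hQ : IsFullyStronglyConglomerable 𝒜 𝒜L H σ Q) {F : Set Ω} (hF : F ∈ 𝒜) (i : ι) :
    Q F (H i) = σ F i := by
  have hHi := h𝒜L.2.1 i
  have hbounds := hQ F hF (H i) hHi (hH.1 i) (H i) hHi (hH.1 i) subset_rfl
  rw [stratValues_block hH, csInf_singleton, csSup_singleton,
    hFCP.self_eq_one h𝒜 (hsub hHi) (hH.1 i), one_mul] at hbounds
  rw [hFCP.1 F hF _ (hsub hHi) (hH.1 i)]
  exact le_antisymm hbounds.2 hbounds.1

theorem QfscSet_eq (hH : IsPartition H) (h𝒜L : IsFieldOver H 𝒜L) (h𝒜 : IsSetField 𝒜)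
    (hsub : 𝒜L ⊆ 𝒜) (π : Set Ω → ℝ) :
    QfscSet 𝒜 𝒜L H π σ = FSCSet 𝒜 𝒜L H σ ∩ {Q | ∀ B ∈ 𝒜L, Q B univ = π B} := by
  ext Q
  constructor
  · rintro ⟨hFCP, ⟨hprior, -⟩, hQ⟩
    exact ⟨⟨hFCP, hQ⟩, hprior⟩
  · rintro ⟨⟨hFCP, hQ⟩, hprior⟩
    exact ⟨hFCP, ⟨hprior, fun F hF i => hQ.cond_block_eq hH h𝒜L h𝒜 hsub hFCP hF i⟩, hQ⟩

end FullConglomerability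

section Lexicographic

variable {α : Type*} (r : α → α → Prop) [IsWellOrder α r] (μ : α → Set Ω → ℝ)
  {𝒜 : Set (Set Ω)} {K : Set Ω} {a : α}

noncomputable def lexCondProb (F K : Set Ω) : ℝ :=
  if h : {a | 0 < μ a K}.Nonempty then
    let a := (IsWellFounded.wf : WellFounded r).min _ h
    μ a (F ∩ K) / μ a K
  else 0

theorem exists_first_pos (h : ∃ a, 0 < μ a K) : ∃ a, 0 < μ a K ∧ ∀ b, r b a → μ b K ≤ 0 :=
  have wf : WellFounded r := IsWellFounded.wf
  ⟨wf.min {a | 0 < μ a K} h, wf.min_mem _ h,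
    fun _ hb => not_lt.1 fun hpos => wf.not_lt_min _ hpos hb⟩

theorem lexCondProb_eq (ha : 0 < μ a K) (hfirst : ∀ b, r b a → μ b K ≤ 0) (F : Set Ω) :
    lexCondProb r μ F K = μ a (F ∩ K) / μ a K := by
  have h : {a | 0 < μ a K}.Nonempty := ⟨a, ha⟩
  have hmin : (IsWellFounded.wf : WellFounded r).min {a | 0 < μ a K} h = a :=
    IsWellFounded.wf.min_eq_of_forall_not_lt (s := {a | 0 < μ a K}) ha
      fun b hb hba => not_le.2 hb (hfirst b hba)
  rw [lexCondProb, dif_pos h, hmin]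

theorem isFCP_lexCondProb (h𝒜 : IsSetField 𝒜) (hμ : ∀ a, IsFAP 𝒜 (μ a))
    (hpos : ∀ K ∈ 𝒜, K.Nonempty → ∃ a, 0 < μ a K) : IsFCP 𝒜 (lexCondProb r μ) := by
  have hcap : ∀ {E K}, E ∈ 𝒜 → K ∈ 𝒜 → E ∩ K ∈ 𝒜 := h𝒜.isSetAlgebra.inter_mem
  refine ⟨fun E _ K _ _ => by simp only [lexCondProb, inter_assoc, inter_self], ?_, ?_⟩
  · intro K hK hne
    obtain ⟨a, ha, hfirst⟩ := exists_first_pos r μ (hpos K hK hne)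
    simp only [lexCondProb_eq r μ ha hfirst]
    exact (hμ a).div h𝒜 hK ha
  · intro E hE F hF K hK hne _
    obtain ⟨a, ha, hfirst⟩ := exists_first_pos r μ (hpos K hK hne)
    have hEFK : E ∩ F ∩ K = F ∩ (E ∩ K) := by rw [inter_right_comm, inter_comm]
    rw [lexCondProb_eq r μ ha hfirst, lexCondProb_eq r μ ha hfirst, hEFK]
    rcases (hμ a).nonneg (hcap hE hK) |>.lt_or_eq with hEK | hEK
    · have hfirst' : ∀ b, r b a → μ b (E ∩ K) ≤ 0 := fun b hb =>
        ((hμ b).mono h𝒜 (hcap hE hK) hK inter_subset_right).trans (hfirst b hb)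
      rw [lexCondProb_eq r μ hEK hfirst']
      field_simp
    · have hzero : μ a (F ∩ (E ∩ K)) = 0 :=
        le_antisymm (hEK ▸ (hμ a).mono h𝒜 (hcap hF (hcap hE hK)) (hcap hE hK) inter_subset_right)
          ((hμ a).nonneg (hcap hF (hcap hE hK)))
      rw [← hEK, hzero]
      simp

end Lexicographic

section Cells

variable {𝒜 : Set (Set Ω)} {s u : Finset (Set Ω)} {A : Set Ω}

def cell (s u : Finset (Set Ω)) : Set Ω :=
  (⋂ A ∈ u, A) ∩ ⋂ A ∈ s \ u, Aᶜ

theorem mem_cell_filter (s : Finset (Set Ω)) (x : Ω) :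
    x ∈ cell s (s.filter (x ∈ ·)) := by
  simp +contextual [cell]

theorem cell_subset (hA : A ∈ u) : cell s u ⊆ A :=
  inter_subset_left.trans (biInter_subset_of_mem hA)

theorem cell_subset_compl (hA : A ∈ s) (hAu : A ∉ u) : cell s u ⊆ Aᶜ :=
  inter_subset_right.trans (biInter_subset_of_mem (Finset.mem_sdiff.2 ⟨hA, hAu⟩))

theorem cell_subset_or_disjoint (hA : A ∈ s) : cell s u ⊆ A ∨ Disjoint (cell s u) A := by
  by_cases hAu : A ∈ u
  · exact Or.inl (cell_subset hAu)
  · exact Or.inr (disjoint_compl_left.mono_left (cell_subset_compl hA hAu))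

theorem pairwiseDisjoint_cell (s : Finset (Set Ω)) :
    (s.powerset : Set (Finset (Set Ω))).PairwiseDisjoint (cell s) := by
  intro u hu v hv huv
  obtain ⟨A, hA⟩ := not_forall.1 (mt Finset.ext huv)
  by_cases hAu : A ∈ u
  · have hAv : A ∉ v := fun hAv => hA (iff_of_true hAu hAv)
    exact disjoint_compl_right.mono (cell_subset hAu)
      (cell_subset_compl (Finset.mem_powerset.1 hu hAu) hAv)
  · have hAv : A ∈ v := not_not.1 fun hAv => hA (iff_of_false hAu hAv)
    exact disjoint_compl_left.mono (cell_subset_compl (Finset.mem_powerset.1 hv hAv) hAu)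
      (cell_subset hAv)

theorem iUnion_cell (s : Finset (Set Ω)) : ⋃ u ∈ s.powerset, cell s u = univ :=
  eq_univ_of_forall fun x => mem_biUnion (Finset.mem_powerset.2 (Finset.filter_subset _ s))
    (mem_cell_filter s x)

theorem cell_mem (h𝒜 : IsSetField 𝒜) (hs : ↑s ⊆ 𝒜) (hu : u ⊆ s) : cell s u ∈ 𝒜 :=
  h𝒜.isSetAlgebra.inter_mem (h𝒜.isSetAlgebra.biInter_mem u fun _ hA => hs (hu hA))
    (h𝒜.isSetAlgebra.biInter_mem _ fun A hA => h𝒜.2.1 A (hs (Finset.mem_sdiff.1 hA).1))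

theorem IsFAP.sum_cell_inter {P : Set Ω → ℝ} (h𝒜 : IsSetField 𝒜) (hP : IsFAP 𝒜 P)
    (hs : ↑s ⊆ 𝒜) (hA : A ∈ 𝒜) : ∑ u ∈ s.powerset, P (cell s u ∩ A) = P A := by
  rw [← hP.biUnion h𝒜 _ (fun u hu => h𝒜.isSetAlgebra.inter_mem
      (cell_mem h𝒜 hs (Finset.mem_powerset.1 hu)) hA)
      ((pairwiseDisjoint_cell s).mono fun u => inter_subset_left),
    ← iUnion₂_inter, iUnion_cell, univ_inter]

end Cells

section Construction

variable {ι : Type*} {𝒜 𝒜L : Set (Set Ω)} {H : ι → Set Ω} {π : Set Ω → ℝ}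
  {σ : Set Ω → ι → ℝ} {s : Finset (Set Ω)}

noncomputable def cellMixture [Nonempty ι] (H : ι → Set Ω) (π : Set Ω → ℝ)
    (σ : Set Ω → ι → ℝ) (s : Finset (Set Ω)) (F : Set Ω) : ℝ :=
  ∑ u ∈ s.powerset, π (cell s u) * σ F (Classical.epsilon fun i => H i ⊆ cell s u)

theorem isFAP_cellMixture [Nonempty ι] (h𝒜L : IsFieldOver H 𝒜L) (hπ : IsFAP 𝒜L π)
    (hσ : IsStrategy 𝒜 H σ) (hs : ↑s ⊆ 𝒜L) : IsFAP 𝒜 (cellMixture H π σ s) :=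
  isFAP_sum _ (fun u hu => hπ.nonneg (cell_mem h𝒜L.1 hs (Finset.mem_powerset.1 hu)))
    (by simpa [hπ.2.1] using hπ.sum_cell_inter h𝒜L.1 hs h𝒜L.1.1) fun _ _ => (hσ _).1

theorem isStronglyConglomerable_cellMixture [Nonempty ι] (hH : IsPartition H)
    (h𝒜L : IsFieldOver H 𝒜L) (h𝒜 : IsSetField 𝒜) (hsub : 𝒜L ⊆ 𝒜) (hπ : IsFAP 𝒜L π)
    (hσ : IsStrategy 𝒜 H σ) (hs : ↑s ⊆ 𝒜L) :
    IsStronglyConglomerable 𝒜 𝒜L H σ (cellMixture H π σ s) :=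
  IsStronglyConglomerable.sum _
    (fun _ hu => hπ.nonneg (cell_mem h𝒜L.1 hs (Finset.mem_powerset.1 hu)))
    fun _ _ => isStronglyConglomerable_strategy hH h𝒜L h𝒜 hsub hσ _

theorem cellMixture_eq [Nonempty ι] (h𝒜L : IsFieldOver H 𝒜L)
    (h𝒜 : IsSetField 𝒜) (hsub : 𝒜L ⊆ 𝒜) (hπ : IsFAP 𝒜L π) (hσ : IsStrategy 𝒜 H σ)
    (hs : ↑s ⊆ 𝒜L) {B : Set Ω} (hB : B ∈ s) : cellMixture H π σ s B = π B := by
  rw [← hπ.sum_cell_inter h𝒜L.1 hs (hs hB)]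
  refine Finset.sum_congr rfl fun u hu => ?_
  have hcell := cell_mem h𝒜L.1 hs (Finset.mem_powerset.1 hu)
  rcases (cell s u).eq_empty_or_nonempty with hempty | hne
  · rw [hempty, empty_inter, hπ.empty h𝒜L.1, zero_mul]
  have hblock : H (Classical.epsilon fun i => H i ⊆ cell s u) ⊆ cell s u :=
    Classical.epsilon_spec (h𝒜L.exists_subset hcell hne)
  rcases cell_subset_or_disjoint hB with hsubB | hdisj
  · rw [(hσ _).2 B (hsub (hs hB)) (hblock.trans hsubB), mul_one, inter_eq_left.2 hsubB]
  · rw [hσ.eq_zero_of_disjoint h𝒜 (hsub (hs hB)) (hdisj.mono_left hblock), mul_zero,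
      hdisj.inter_eq, hπ.empty h𝒜L.1]

/-- The point masses come last: every `K ∈ 𝒜L⁰` gets full `σ(·|H i)`-mass from a block inside
it, so it is conditioned on `ν` or on a strategy measure, both strongly conglomerable. -/
noncomputable def levels (ν : Set Ω → ℝ) (σ : Set Ω → ι → ℝ) : Unit ⊕ ι ⊕ Ω → Set Ω → ℝ
  | .inl _ => ν
  | .inr (.inl i) => fun F => σ F i
  | .inr (.inr x) => fun F => F.indicator 1 x

abbrev levelOrder (ι Ω : Type*) : Unit ⊕ ι ⊕ Ω → Unit ⊕ ι ⊕ Ω → Prop :=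
  Sum.Lex emptyRelation (Sum.Lex WellOrderingRel WellOrderingRel)

noncomputable def lexExtension (ν : Set Ω → ℝ) (σ : Set Ω → ι → ℝ) : Set Ω → Set Ω → ℝ :=
  lexCondProb (levelOrder ι Ω) (levels ν σ)

variable {ν : Set Ω → ℝ}

theorem isFCP_lexExtension (h𝒜 : IsSetField 𝒜) (hν : IsFAP 𝒜 ν) (hσ : IsStrategy 𝒜 H σ) :
    IsFCP 𝒜 (lexExtension ν σ) := by
  refine isFCP_lexCondProb _ _ h𝒜 ?_ fun K _ ⟨x, hx⟩ => ⟨.inr (.inr x), by simp [levels, hx]⟩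
  rintro (_ | i | x)
  exacts [hν, (hσ i).1, isFAP_indicator 𝒜 x]

theorem lexExtension_univ (hν : IsFAP 𝒜 ν) (F : Set Ω) : lexExtension ν σ F univ = ν F := by
  rw [lexExtension, lexCondProb_eq _ _ (a := .inl ()) (by simp [levels, hν.2.1])]
  · simp [levels, hν.2.1]
  · rintro (_ | _) hb <;> simp at hb

theorem exists_stronglyConglomerable_section (hH : IsPartition H) (h𝒜L : IsFieldOver H 𝒜L)
    (h𝒜 : IsSetField 𝒜) (hsub : 𝒜L ⊆ 𝒜) (hσ : IsStrategy 𝒜 H σ)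
    (hν : IsStronglyConglomerable 𝒜 𝒜L H σ ν) {K : Set Ω} (hK : K ∈ 𝒜L) (hne : K.Nonempty) :
    ∃ ρ, IsStronglyConglomerable 𝒜 𝒜L H σ ρ ∧ 0 < ρ K ∧
      ∀ F, lexExtension ν σ F K = ρ (F ∩ K) / ρ K := by
  obtain ⟨i, hi⟩ := h𝒜L.exists_subset hK hne
  have hiK : 0 < levels ν σ (.inr (.inl i)) K := by simp [levels, (hσ i).2 K (hsub hK) hi]
  obtain ⟨a, ha, hfirst⟩ := exists_first_pos (levelOrder ι Ω) (levels ν σ) ⟨_, hiK⟩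
  refine ⟨levels ν σ a, ?_, ha, lexCondProb_eq _ _ ha hfirst⟩
  rcases a with _ | j | x
  · exact hν
  · exact isStronglyConglomerable_strategy hH h𝒜L h𝒜 hsub hσ j
  · exact absurd (hfirst _ (.inr (.sep i x))) (not_le.2 hiK)

theorem exists_mem_FSCSet_prior_eq [Nonempty ι] (hH : IsPartition H) (h𝒜L : IsFieldOver H 𝒜L)
    (h𝒜 : IsSetField 𝒜) (hsub : 𝒜L ⊆ 𝒜) (hπ : IsFAP 𝒜L π) (hσ : IsStrategy 𝒜 H σ)
    (hs : ↑s ⊆ 𝒜L) : ∃ Q ∈ FSCSet 𝒜 𝒜L H σ, ∀ B ∈ s, Q B univ = π B := by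
  have hν := isFAP_cellMixture h𝒜L hπ hσ hs
  have hνc := isStronglyConglomerable_cellMixture hH h𝒜L h𝒜 hsub hπ hσ hs
  refine ⟨lexExtension (cellMixture H π σ s) σ, ⟨isFCP_lexExtension h𝒜 hν hσ, ?_⟩,
    fun B hB => by rw [lexExtension_univ hν, cellMixture_eq h𝒜L h𝒜 hsub hπ hσ hs hB]⟩
  intro F hF K hK hne B hB _ hBK
  obtain ⟨ρ, hρ, hpos, hQ⟩ := exists_stronglyConglomerable_section hH h𝒜L h𝒜 hsub hσ hνc hK hne
  rw [hQ, hQ]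
  exact hρ.div hF hB hBK hpos

end Construction

section Topology

variable {ι : Type*} {𝒜 𝒜L : Set (Set Ω)} {H : ι → Set Ω} {σ : Set Ω → ι → ℝ}
  {Q Q' : Set Ω → Set Ω → ℝ}

abbrev CondPairs (𝒜 : Set (Set Ω)) : Type _ :=
  {p : Set Ω × Set Ω // p.1 ∈ 𝒜 ∧ p.2 ∈ 𝒜 ∧ p.2.Nonempty}

noncomputable def extendPairs (𝒜 : Set (Set Ω)) (f : CondPairs 𝒜 → ℝ) : Set Ω → Set Ω → ℝ :=
  fun F K => if h : F ∈ 𝒜 ∧ K ∈ 𝒜 ∧ K.Nonempty then f ⟨(F, K), h⟩ else 0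

theorem extendPairs_apply (f : CondPairs 𝒜 → ℝ) {F K : Set Ω}
    (h : F ∈ 𝒜 ∧ K ∈ 𝒜 ∧ K.Nonempty) : extendPairs 𝒜 f F K = f ⟨(F, K), h⟩ :=
  dif_pos h

theorem continuous_extendPairs : Continuous (extendPairs 𝒜) :=
  continuous_pi fun F => continuous_pi fun K => by
    unfold extendPairs
    split
    exacts [continuous_apply _, continuous_const]

theorem restrictPairs_extendPairs (f : CondPairs 𝒜 → ℝ) :
    restrictPairs 𝒜 𝒜 (extendPairs 𝒜 f) = f :=
  funext fun p => extendPairs_apply f p.2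

theorem IsFCP.congr (h𝒜 : IsSetField 𝒜) (hQ : IsFCP 𝒜 Q)
    (h : ∀ F ∈ 𝒜, ∀ K ∈ 𝒜, K.Nonempty → Q' F K = Q F K) : IsFCP 𝒜 Q' := by
  have hcap : ∀ {E K}, E ∈ 𝒜 → K ∈ 𝒜 → E ∩ K ∈ 𝒜 := h𝒜.isSetAlgebra.inter_mem
  refine ⟨fun E hE K hK hne => ?_, fun K hK hne => ⟨fun A hA => ?_, ?_, fun A hA B hB hAB => ?_⟩,
    fun E hE F hF K hK hne hEK => ?_⟩
  · rw [h E hE K hK hne, h _ (hcap hE hK) K hK hne]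
    exact hQ.1 E hE K hK hne
  · beta_reduce
    rw [h A hA K hK hne]
    exact (hQ.2.1 K hK hne).1 A hA
  · beta_reduce
    rw [h univ h𝒜.1 K hK hne]
    exact (hQ.2.1 K hK hne).2.1
  · beta_reduce
    rw [h _ (h𝒜.2.2 A hA B hB) K hK hne, h A hA K hK hne, h B hB K hK hne]
    exact (hQ.2.1 K hK hne).2.2 A hA B hB hAB
  · rw [h _ (hcap hE hF) K hK hne, h E hE K hK hne, h F hF _ (hcap hE hK) hEK]
    exact hQ.2.2 E hE F hF K hK hne hEK

theorem IsFullyStronglyConglomerable.congr (h𝒜 : IsSetField 𝒜) (hsub : 𝒜L ⊆ 𝒜)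
    (hQ : IsFullyStronglyConglomerable 𝒜 𝒜L H σ Q)
    (h : ∀ F ∈ 𝒜, ∀ K ∈ 𝒜, K.Nonempty → Q' F K = Q F K) :
    IsFullyStronglyConglomerable 𝒜 𝒜L H σ Q' := by
  intro F hF K hK hne B hB hBne hBK
  rw [h B (hsub hB) K (hsub hK) hne,
    h _ (h𝒜.isSetAlgebra.inter_mem hF (hsub hB)) K (hsub hK) hne]
  exact hQ F hF K hK hne B hB hBne hBK

theorem isClosed_FSCSet : IsClosed (FSCSet 𝒜 𝒜L H σ) := by
  simp only [FSCSet, IsFCP, IsFAP, IsFullyStronglyConglomerable, ofPred_and, ofPred_forall]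
  repeat' first
    | (apply isClosed_iInter; intro _)
    | apply IsClosed.inter
    | apply isClosed_eq
    | apply isClosed_le
    | fun_prop

theorem image_restrictPairs_FSCSet (h𝒜 : IsSetField 𝒜) (hsub : 𝒜L ⊆ 𝒜) :
    restrictPairs 𝒜 𝒜 '' FSCSet 𝒜 𝒜L H σ = extendPairs 𝒜 ⁻¹' FSCSet 𝒜 𝒜L H σ := by
  ext f
  constructor
  · rintro ⟨Q, ⟨hFCP, hQ⟩, rfl⟩
    have h : ∀ F ∈ 𝒜, ∀ K ∈ 𝒜, K.Nonempty → extendPairs 𝒜 (restrictPairs 𝒜 𝒜 Q) F K = Q F K :=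
      fun F hF K hK hne => extendPairs_apply _ ⟨hF, hK, hne⟩
    exact ⟨hFCP.congr h𝒜 h, hQ.congr h𝒜 hsub h⟩
  · exact fun hf => ⟨_, hf, restrictPairs_extendPairs f⟩

theorem isCompact_image_restrictPairs_FSCSet (h𝒜 : IsSetField 𝒜) (hsub : 𝒜L ⊆ 𝒜) :
    IsCompact (restrictPairs 𝒜 𝒜 '' FSCSet 𝒜 𝒜L H σ) := by
  rw [image_restrictPairs_FSCSet h𝒜 hsub]
  refine (isCompact_univ_pi fun _ => isCompact_Icc (a := (0 : ℝ)) (b := 1)).of_isClosed_subset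
    (isClosed_FSCSet.preimage continuous_extendPairs) fun f hf p _ => ?_
  have h01 := (hf.1.2.1 _ p.2.2.1 p.2.2.2).1 _ p.2.1
  beta_reduce at h01
  rwa [extendPairs_apply f p.2] at h01

theorem image_restrictPairs_QfscSet [Nonempty Ω] (hH : IsPartition H) (h𝒜L : IsFieldOver H 𝒜L)
    (h𝒜 : IsSetField 𝒜) (hsub : 𝒜L ⊆ 𝒜) (π : Set Ω → ℝ) :
    restrictPairs 𝒜 𝒜 '' QfscSet 𝒜 𝒜L H π σ =
      restrictPairs 𝒜 𝒜 '' FSCSet 𝒜 𝒜L H σ ∩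
        ⋂ B : 𝒜L, {f | f ⟨(B, univ), hsub B.2, h𝒜.1, univ_nonempty⟩ = π B} := by
  rw [QfscSet_eq hH h𝒜L h𝒜 hsub]
  ext f
  simp only [mem_image, mem_inter_iff, mem_iInter, mem_ofPred_eq, Subtype.forall]
  constructor
  · rintro ⟨Q, ⟨hQ, hprior⟩, rfl⟩
    exact ⟨⟨Q, hQ, rfl⟩, fun B hB => hprior B hB⟩
  · rintro ⟨⟨Q, hQ, rfl⟩, hprior⟩
    exact ⟨Q, ⟨hQ, fun B hB => hprior B hB⟩, rfl⟩

end Topology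

theorem statement11_general {Ω ι κ : Type*} [Nonempty Ω] (H : ι → Set Ω) (E : κ → Set Ω)
    (𝒜L 𝒜E 𝒜 : Set (Set Ω))
    (hH : IsPartition H)
    (h𝒜L : IsFieldOver H 𝒜L)
    (h𝒜 : IsJointField H E 𝒜L 𝒜E 𝒜)
    (π : Set Ω → ℝ) (hπ : IsFAP 𝒜L π)
    (σ : Set Ω → ι → ℝ) (hσ : IsStrategy 𝒜 H σ) :
    (restrictPairs 𝒜 𝒜 '' QfscSet 𝒜 𝒜L H π σ).Nonempty ∧
    IsCompact (restrictPairs 𝒜 𝒜 '' QfscSet 𝒜 𝒜L H π σ) := by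
  obtain ⟨h𝒜F, hsub, -, -⟩ := h𝒜
  have : Nonempty ι := (hH.exists_mem (Classical.arbitrary Ω)).nonempty
  rw [image_restrictPairs_QfscSet hH h𝒜L h𝒜F hsub]
  have hcompact := isCompact_image_restrictPairs_FSCSet (H := H) (σ := σ) h𝒜F hsub
  have hclosed (B : 𝒜L) : IsClosed {f : CondPairs 𝒜 → ℝ |
      f ⟨(B, univ), hsub B.2, h𝒜F.1, univ_nonempty⟩ = π B} :=
    isClosed_eq (continuous_apply _) continuous_const
  refine ⟨hcompact.inter_iInter_nonempty _ hclosed fun t => ?_,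
    hcompact.inter_right (isClosed_iInter hclosed)⟩
  obtain ⟨Q, hQ, hprior⟩ := exists_mem_FSCSet_prior_eq (s := t.map (.subtype _))
    hH h𝒜L h𝒜F hsub hπ hσ fun B hB => by
      obtain ⟨B, -, rfl⟩ := Finset.mem_map.1 hB
      exact B.2
  exact ⟨restrictPairs 𝒜 𝒜 Q, mem_image_of_mem _ hQ,
    mem_iInter₂.2 fun B hB => hprior B (Finset.mem_map_of_mem _ hB)⟩

/-- `𝒬^fsc` is a nonempty compact subset of `[0,1]^(𝒜 × 𝒜⁰)` with the
product topology of pointwise convergence. -/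
theorem statement11 {Ω ι κ : Type*} [Nonempty Ω] (H : ι → Set Ω) (E : κ → Set Ω)
    (𝒜L 𝒜E 𝒜 : Set (Set Ω))
    (hH : IsPartition H) (hE : IsPartition E)
    (h𝒜L : IsFieldOver H 𝒜L) (h𝒜E : IsFieldOver E 𝒜E)
    (h𝒜 : IsJointField H E 𝒜L 𝒜E 𝒜)
    (π : Set Ω → ℝ) (hπ : IsFAP 𝒜L π)
    (σ : Set Ω → ι → ℝ) (hσ : IsStrategy 𝒜 H σ) :
    (restrictPairs 𝒜 𝒜 '' QfscSet 𝒜 𝒜L H π σ).Nonempty ∧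
    IsCompact (restrictPairs 𝒜 𝒜 '' QfscSet 𝒜 𝒜L H π σ) :=
  statement11_general H E 𝒜L 𝒜E 𝒜 hH h𝒜L h𝒜 π hπ σ hσ
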